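/- arXiv:1706.05907 — 2 statements merged into one kernel-verified Lean document; each statement's English description precedes it below -/
import Mathlib

section
/- Let p, N be positive integers, η = {1,...,N}, and let L² be the Hilbert space of square-integrable complex functions on [0,1)^N. With 𝒟_α(i,m) defined as in the context, if α ⊆ η and i, q ∈ P_η satisfy i_{η∖α} = q_{η∖α}, then for all m, r ∈ P_α: 𝒟_α(i, m)·𝒟_α(q, r) = δ(m, q_α)·𝒟_α(i, r), where δ(m, q_α) = 1 if m = q_α and 0 otherwise. In particular, for fixed α and fixed values on η∖α the operators 𝒟_α form a system of matrix units indexed by P_α × P_α. -/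
/-!
On a single coordinate `j` the operators satisfy `𝒜_x 𝒜_y = δ_{xy} 𝒜_x`, `ℬ_x 𝒜_y = δ_{xy} ℬ_y`
and `ℬ_x ℬ_y = ℬ_y` (the last because `p ∫ χ_x = 1`), while operators acting on different
coordinates commute (for two averaging operators this is Fubini). Hence `𝒟_α(i,m)` is the
commuting product over `j` of the local factors `𝒜_{i_j} ℬ_{m_j}` (`j ∈ α`) and
`𝒜_{i_j} (1 - ℬ_{i_j})` (`j ∉ α`), and the product of two such operators is computed factor by
factor: `𝒜_i ℬ_m · 𝒜_q ℬ_r = δ_{mq} 𝒜_i ℬ_r`, and `𝒜_i (1 - ℬ_i)` is idempotent.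
-/

open MeasureTheory

/-- The cube `[0,1)^ι` with Lebesgue measure, modelled as the product of the
Lebesgue measure on `ℝ` restricted to `[0,1)` over each coordinate. -/
noncomputable def cubeMeasure (ι : Type*) [Fintype ι] : Measure (ι → ℝ) :=
  Measure.pi fun _ => (volume : Measure ℝ).restrict (Set.Ico 0 1)

/-- The step function `χ_r` (for `r ∈ {1,...,p}` encoded as `r : Fin p`, so that
`χ_r` is the indicator of `[r/p, (r+1)/p) = [(r'-1)/p, r'/p)` for `r' = r+1`). -/
noncomputable def chi (p : ℕ) (r : Fin p) (y : ℝ) : ℂ :=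
  if (r : ℝ) / p ≤ y ∧ y < ((r : ℝ) + 1) / p then 1 else 0


/-- `𝒞_α(i,m) = (Π_{j ∈ η} 𝒜_{i_j j}) · (Π_{j ∈ α} ℬ_{m_j j})`, the products being
taken in the order of increasing indices.  Multi-indices `i ∈ P_η` and `m ∈ P_α`
are encoded as functions `Fin N → Fin p` (the operator only uses the values of `m`
on `α`). -/
noncomputable def Cop {p N : ℕ}
    (A B : Fin p → Fin N →
      (Lp ℂ 2 (cubeMeasure (Fin N)) →L[ℂ] Lp ℂ 2 (cubeMeasure (Fin N))))
    (α : Finset (Fin N)) (i m : Fin N → Fin p) :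
    Lp ℂ 2 (cubeMeasure (Fin N)) →L[ℂ] Lp ℂ 2 (cubeMeasure (Fin N)) :=
  (((List.finRange N).map fun j => A (i j) j).prod) *
    (((α.sort (· ≤ ·)).map fun j => B (m j) j).prod)

/-- `𝒟_α(i,m) = 𝒞_α(i,m) · Π_{j ∈ η∖α} (1 − ℬ_{i_j j})`. -/
noncomputable def Dop {p N : ℕ}
    (A B : Fin p → Fin N →
      (Lp ℂ 2 (cubeMeasure (Fin N)) →L[ℂ] Lp ℂ 2 (cubeMeasure (Fin N))))
    (α : Finset (Fin N)) (i m : Fin N → Fin p) :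
    Lp ℂ 2 (cubeMeasure (Fin N)) →L[ℂ] Lp ℂ 2 (cubeMeasure (Fin N)) :=
  Cop A B α i m *
    ((((Finset.univ \ α).sort (· ≤ ·)).map fun j => 1 - B (i j) j).prod)

open Function

theorem Subring.commute_of_mem_closure {R : Type*} [Ring R] {s t : Set R}
    (h : ∀ x ∈ s, ∀ y ∈ t, Commute x y) {x y : R} (hx : x ∈ closure s) (hy : y ∈ closure t) :
    Commute x y := by
  have hy' : y ∈ centralizer s :=
    closure_le.mpr (fun y' hy' => mem_centralizer_iff.mpr fun x' hx' => (h x' hx' y' hy').eq) hy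
  exact (mem_centralizer_iff.mp (closure_le_centralizer_centralizer s hx) y hy').symm

theorem List.prod_map_sort_eq_noncommProd {ι M : Type*} [LinearOrder ι] [Monoid M]
    (s : Finset ι) (f : ι → M) (comm : (s : Set ι).Pairwise (Commute on f)) :
    ((s.sort (· ≤ ·)).map f).prod = s.noncommProd f comm := by
  rw [← Finset.noncommProd_toFinset _ f (by rwa [Finset.sort_toFinset]) (Finset.sort_nodup _ _)]
  exact Finset.noncommProd_congr (Finset.sort_toFinset _ _) (fun _ _ => rfl) _

theorem Finset.noncommProd_eq_zero_of_mem {ι M₀ : Type*} [MonoidWithZero M₀] {s : Finset ι}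
    {f : ι → M₀} (comm : (s : Set ι).Pairwise (Commute on f)) {j : ι} (hj : j ∈ s) (h0 : f j = 0) :
    s.noncommProd f comm = 0 := by
  classical
  rw [← s.mul_noncommProd_erase hj f comm, h0, zero_mul]

section

variable {R ι κ : Type*} [Ring R]

def coordSubring (a b : κ → ι → R) (j : ι) : Subring R :=
  Subring.closure (Set.range (a · j) ∪ Set.range (b · j))

theorem a_mem_coordSubring (a b : κ → ι → R) (x : κ) (j : ι) : a x j ∈ coordSubring a b j :=
  Subring.subset_closure (Or.inl ⟨x, rfl⟩)

theorem b_mem_coordSubring (a b : κ → ι → R) (x : κ) (j : ι) : b x j ∈ coordSubring a b j :=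
  Subring.subset_closure (Or.inr ⟨x, rfl⟩)

theorem one_sub_b_mem_coordSubring (a b : κ → ι → R) (x : κ) (j : ι) :
    1 - b x j ∈ coordSubring a b j :=
  sub_mem (one_mem _) (b_mem_coordSubring a b x j)

structure ABRelations [DecidableEq κ] (a b : κ → ι → R) : Prop where
  a_mul_a : ∀ j x y, a x j * a y j = if x = y then a x j else 0
  b_mul_a : ∀ j x y, b x j * a y j = if x = y then b y j else 0
  b_mul_b : ∀ j x y, b x j * b y j = b y j
  commute_a_a : ∀ ⦃j j'⦄, j ≠ j' → ∀ x y, Commute (a x j) (a y j')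
  commute_a_b : ∀ ⦃j j'⦄, j ≠ j' → ∀ x y, Commute (a x j) (b y j')
  commute_b_b : ∀ ⦃j j'⦄, j ≠ j' → ∀ x y, Commute (b x j) (b y j')

def localFactor [DecidableEq ι] (a b : κ → ι → R) (α : Finset ι) (i m : ι → κ) (j : ι) : R :=
  a (i j) j * (if j ∈ α then b (m j) j else 1 - b (i j) j)

theorem localFactor_mem_coordSubring [DecidableEq ι] (a b : κ → ι → R) (α : Finset ι)
    (i m : ι → κ) (j : ι) : localFactor a b α i m j ∈ coordSubring a b j := by
  refine mul_mem (a_mem_coordSubring a b _ j) ?_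
  split_ifs
  exacts [b_mem_coordSubring a b _ j, one_sub_b_mem_coordSubring a b _ j]

namespace ABRelations

variable [DecidableEq κ] {a b : κ → ι → R} (h : ABRelations a b)
include h

theorem commute_of_mem_coordSubring {j j' : ι} (hjj' : j ≠ j') {x y : R}
    (hx : x ∈ coordSubring a b j) (hy : y ∈ coordSubring a b j') : Commute x y := by
  refine Subring.commute_of_mem_closure ?_ hx hy
  rintro _ (⟨x, rfl⟩ | ⟨x, rfl⟩) _ (⟨y, rfl⟩ | ⟨y, rfl⟩)
  · exact h.commute_a_a hjj' x y
  · exact h.commute_a_b hjj' x y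
  · exact (h.commute_a_b hjj'.symm y x).symm
  · exact h.commute_b_b hjj' x y

theorem pairwise_commute {f g : ι → R} (hf : ∀ j, f j ∈ coordSubring a b j)
    (hg : ∀ j, g j ∈ coordSubring a b j) (s : Set ι) :
    s.Pairwise fun j j' => Commute (f j) (g j') :=
  fun _ _ _ _ hjj' => h.commute_of_mem_coordSubring hjj' (hf _) (hg _)

theorem a_mul_b_mul_a_mul_b (j : ι) (x y z w : κ) :
    a x j * b y j * (a z j * b w j) = if y = z then a x j * b w j else 0 := by
  rw [mul_assoc, ← mul_assoc (b y j), h.b_mul_a]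
  split_ifs
  · rw [h.b_mul_b]
  · rw [zero_mul, mul_zero]

theorem isIdempotentElem_a_mul_one_sub_b (j : ι) (x : κ) :
    IsIdempotentElem (a x j * (1 - b x j)) := by
  have haa : a x j * a x j = a x j := by simpa using h.a_mul_a j x x
  have hba : (1 - b x j) * a x j = a x j - b x j := by
    simpa [sub_mul] using h.b_mul_a j x x
  calc a x j * (1 - b x j) * (a x j * (1 - b x j))
      = a x j * ((1 - b x j) * a x j) * (1 - b x j) := by simp only [mul_assoc]
    _ = (a x j - a x j * b x j) * (1 - b x j) := by rw [hba, mul_sub (a x j), haa]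
    _ = a x j * (1 - b x j) := by
      rw [sub_mul, mul_assoc, mul_one_sub (b x j), h.b_mul_b, sub_self, mul_zero, sub_zero,
        mul_one_sub]

theorem pairwise_commute_localFactor [DecidableEq ι] (α α' : Finset ι) (i m i' m' : ι → κ)
    (s : Set ι) :
    s.Pairwise fun j j' => Commute (localFactor a b α i m j) (localFactor a b α' i' m' j') :=
  h.pairwise_commute (localFactor_mem_coordSubring a b α i m)
    (localFactor_mem_coordSubring a b α' i' m') s

theorem localFactor_mul_localFactor [DecidableEq ι] {α : Finset ι} {i q : ι → κ} {j : ι}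
    (hiq : j ∉ α → i j = q j) (m r : ι → κ) :
    localFactor a b α i m j * localFactor a b α q r j =
      if j ∈ α ∧ m j ≠ q j then 0 else localFactor a b α i r j := by
  by_cases hj : j ∈ α
  · simp only [localFactor, hj, if_true, true_and]
    rw [h.a_mul_b_mul_a_mul_b]
    by_cases hmq : m j = q j <;> simp [hmq]
  · simp only [localFactor, hj, if_false, false_and, ← hiq hj]
    exact (h.isIdempotentElem_a_mul_one_sub_b j (i j)).eq

theorem prod_sort_eq_noncommProd_localFactor [Fintype ι] [LinearOrder ι] [DecidableEq ι]
    (α : Finset ι) (i m : ι → κ) :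
    ((Finset.univ.sort (· ≤ ·)).map fun j => a (i j) j).prod *
        (((α.sort (· ≤ ·)).map fun j => b (m j) j).prod *
          (((Finset.univ \ α).sort (· ≤ ·)).map fun j => 1 - b (i j) j).prod) =
      Finset.univ.noncommProd (localFactor a b α i m)
        (h.pairwise_commute_localFactor _ _ _ _ _ _ _) := by
  set g : ι → R := fun j => if j ∈ α then b (m j) j else 1 - b (i j) j
  have ha : ∀ j, a (i j) j ∈ coordSubring a b j := fun j => a_mem_coordSubring a b _ j
  have hb : ∀ j, b (m j) j ∈ coordSubring a b j := fun j => b_mem_coordSubring a b _ j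
  have hc : ∀ j, 1 - b (i j) j ∈ coordSubring a b j := fun j => one_sub_b_mem_coordSubring a b _ j
  have hg : ∀ j, g j ∈ coordSubring a b j := fun j => by
    simp only [g]
    split_ifs
    exacts [hb j, hc j]
  have hgα : α.noncommProd (fun j => b (m j) j) (h.pairwise_commute hb hb _) =
      α.noncommProd g (h.pairwise_commute hg hg _) :=
    Finset.noncommProd_congr rfl (fun j hj => (if_pos hj).symm) _
  have hgαc : (Finset.univ \ α).noncommProd (fun j => 1 - b (i j) j) (h.pairwise_commute hc hc _) =
      (Finset.univ \ α).noncommProd g (h.pairwise_commute hg hg _) :=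
    Finset.noncommProd_congr rfl (fun j hj => (if_neg (Finset.mem_sdiff.mp hj).2).symm) _
  rw [List.prod_map_sort_eq_noncommProd _ _ (h.pairwise_commute ha ha _),
    List.prod_map_sort_eq_noncommProd _ _ (h.pairwise_commute hb hb _),
    List.prod_map_sort_eq_noncommProd _ _ (h.pairwise_commute hc hc _), hgα, hgαc,
    ← Finset.noncommProd_union_of_disjoint Finset.disjoint_sdiff _ (h.pairwise_commute hg hg _),
    Finset.noncommProd_congr (Finset.union_sdiff_of_subset α.subset_univ) (fun _ _ => rfl)
      (h.pairwise_commute hg hg _)]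
  exact (Finset.noncommProd_mul_distrib _ _ _ _ (h.pairwise_commute hg ha _)).symm

theorem noncommProd_localFactor_mul [Fintype ι] [DecidableEq ι] {α : Finset ι} {i q : ι → κ}
    (hiq : ∀ j ∉ α, i j = q j) (m r : ι → κ) :
    Finset.univ.noncommProd (localFactor a b α i m) (h.pairwise_commute_localFactor _ _ _ _ _ _ _) *
        Finset.univ.noncommProd (localFactor a b α q r)
          (h.pairwise_commute_localFactor _ _ _ _ _ _ _) =
      if ∀ j ∈ α, m j = q j then
        Finset.univ.noncommProd (localFactor a b α i r)
          (h.pairwise_commute_localFactor _ _ _ _ _ _ _)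
      else 0 := by
  rw [← Finset.noncommProd_mul_distrib _ _ _ _ (h.pairwise_commute_localFactor _ _ _ _ _ _ _)]
  split_ifs with hmq
  · refine Finset.noncommProd_congr rfl (fun j _ => ?_) _
    rw [Pi.mul_apply, h.localFactor_mul_localFactor (hiq j), if_neg]
    exact fun hj => hj.2 (hmq j hj.1)
  · push Not at hmq
    obtain ⟨j, hj, hne⟩ := hmq
    refine Finset.noncommProd_eq_zero_of_mem _ (Finset.mem_univ j) ?_
    rw [Pi.mul_apply, h.localFactor_mul_localFactor (hiq j), if_pos ⟨hj, hne⟩]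

end ABRelations

end

section UpdateCoordinate

variable {ι : Type*} [Fintype ι] [DecidableEq ι] {X : ι → Type*} [∀ i, MeasurableSpace (X i)]
  {μ : ∀ i, Measure (X i)} [∀ i, IsProbabilityMeasure (μ i)]

theorem measurePreserving_update (j : ι) :
    MeasurePreserving (fun q : (∀ i, X i) × X j => update q.1 j q.2)
      ((Measure.pi μ).prod (μ j)) (Measure.pi μ) := by
  have hmeas : Measurable (fun q : (∀ i, X i) × X j => update q.1 j q.2) := by fun_prop
  refine ⟨hmeas, (Measure.pi_eq fun s hs => ?_).symm⟩
  have hpre : (fun q : (∀ i, X i) × X j => update q.1 j q.2) ⁻¹' Set.univ.pi s =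
      Set.univ.pi (update s j Set.univ) ×ˢ s j := by
    ext ⟨x, t⟩
    simp only [Set.mem_preimage, Set.mem_univ_pi, Set.mem_prod]
    constructor
    · intro hx
      refine ⟨fun i => ?_, by simpa using hx j⟩
      rcases eq_or_ne i j with rfl | hij
      · simp
      · simpa [update_of_ne hij] using hx i
    · rintro ⟨hx, ht⟩ i
      rcases eq_or_ne i j with rfl | hij
      · simpa using ht
      · simpa [update_of_ne hij] using hx i
  rw [Measure.map_apply hmeas (MeasurableSet.univ_pi hs), hpre, Measure.prod_prod, Measure.pi_pi,
    ← Finset.prod_erase_mul _ _ (Finset.mem_univ j),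
    ← Finset.prod_erase_mul _ _ (Finset.mem_univ j)]
  simp only [update_self, measure_univ, mul_one]
  congr 1
  exact Finset.prod_congr rfl fun i hi => by rw [update_of_ne (Finset.ne_of_mem_erase hi)]

theorem ae_ae_update_of_ae_eq {β : Type*} {f g : (∀ i, X i) → β} (h : f =ᵐ[Measure.pi μ] g)
    (j : ι) : ∀ᵐ x ∂Measure.pi μ, ∀ᵐ t ∂μ j, f (update x j t) = g (update x j t) := by
  refine Measure.ae_ae_of_ae_prod (p := fun q => f (update q.1 j q.2) = g (update q.1 j q.2)) ?_
  exact (measurePreserving_update j).quasiMeasurePreserving.ae_eq h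

theorem integrable_update_update_ae {E : Type*} [NormedAddCommGroup E] {f : (∀ i, X i) → E}
    (hf : Integrable f (Measure.pi μ)) (j j' : ι) :
    ∀ᵐ x ∂Measure.pi μ,
      Integrable (fun z : X j × X j' => f (update (update x j z.1) j' z.2))
        ((μ j).prod (μ j')) := by
  have hassoc := (measurePreserving_prodAssoc (Measure.pi μ) (μ j) (μ j')).symm
    MeasurableEquiv.prodAssoc
  have hupd := (measurePreserving_update (μ := μ) j').comp
    (((measurePreserving_update (μ := μ) j).prod (MeasurePreserving.id (μ j'))).comp hassoc)
  exact ((hupd.integrable_comp hf.aestronglyMeasurable).mpr hf).prod_right_ae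

end UpdateCoordinate

instance : IsProbabilityMeasure (volume.restrict (Set.Ico (0 : ℝ) 1)) := ⟨by simp⟩

instance (ι : Type*) [Fintype ι] : IsProbabilityMeasure (cubeMeasure ι) := by
  unfold cubeMeasure
  infer_instance

theorem chi_mul_chi {p : ℕ} (x y : Fin p) (t : ℝ) :
    chi p x t * chi p y t = if x = y then chi p y t else 0 := by
  have hp : (0 : ℝ) < p := by exact_mod_cast x.pos
  split_ifs with hxy
  · subst hxy
    unfold chi
    split_ifs <;> simp
  · unfold chi
    split_ifs with hx hy <;> try simp
    have h1 : ((x : ℕ) : ℝ) < (y : ℕ) + 1 :=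
      (div_lt_div_iff_of_pos_right hp).mp (hx.1.trans_lt hy.2)
    have h2 : ((y : ℕ) : ℝ) < (x : ℕ) + 1 :=
      (div_lt_div_iff_of_pos_right hp).mp (hy.1.trans_lt hx.2)
    norm_cast at h1 h2
    exact hxy (Fin.ext (by omega))

theorem measurable_chi {p : ℕ} (x : Fin p) : Measurable (chi p x) :=
  Measurable.ite (measurableSet_Ico (a := (x : ℝ) / p) (b := ((x : ℝ) + 1) / p))
    measurable_const measurable_const

theorem norm_chi_le {p : ℕ} (x : Fin p) (t : ℝ) : ‖chi p x t‖ ≤ 1 := by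
  unfold chi; split_ifs <;> simp

theorem integral_chi {p : ℕ} (x : Fin p) : ∫ t in Set.Ico (0 : ℝ) 1, chi p x t = (p : ℂ)⁻¹ := by
  have hp : (0 : ℝ) < p := by exact_mod_cast x.pos
  have hsub : Set.Ico ((x : ℝ) / p) (((x : ℝ) + 1) / p) ⊆ Set.Ico 0 1 := by
    refine Set.Ico_subset_Ico (by positivity) ((div_le_one hp).mpr ?_)
    exact_mod_cast x.is_lt
  have hchi : chi p x = (Set.Ico ((x : ℝ) / p) (((x : ℝ) + 1) / p)).indicator 1 := by
    ext t
    simp only [chi, Set.indicator_apply, Set.mem_Ico, Pi.one_apply]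
  rw [hchi, setIntegral_indicator measurableSet_Ico, Set.inter_eq_right.mpr hsub,
    Pi.one_def, setIntegral_const, Real.volume_real_Ico, ← sub_div, add_sub_cancel_left,
    max_eq_left (by positivity)]
  simp

section Operators

variable {ι : Type*} [Fintype ι] {p : ℕ}
  {A B : Fin p → ι → (Lp ℂ 2 (cubeMeasure ι) →L[ℂ] Lp ℂ 2 (cubeMeasure ι))}
  (hA : ∀ (x : Fin p) (j : ι) (u : Lp ℂ 2 (cubeMeasure ι)),
    ⇑(A x j u) =ᵐ[cubeMeasure ι] fun k => chi p x (k j) * u k)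

include hA in
theorem A_apply_ae_eq_of_ae_eq {u : Lp ℂ 2 (cubeMeasure ι)} {f : (ι → ℝ) → ℂ}
    (hu : ⇑u =ᵐ[cubeMeasure ι] f) (x : Fin p) (j : ι) :
    ⇑(A x j u) =ᵐ[cubeMeasure ι] fun k => chi p x (k j) * f k := by
  filter_upwards [hA x j u, hu] with k hk hk'
  rw [hk, hk']

include hA in
theorem A_mul_A (j : ι) (x y : Fin p) : A x j * A y j = if x = y then A x j else 0 := by
  have key (u : Lp ℂ 2 (cubeMeasure ι)) : ⇑((A x j * A y j) u) =ᵐ[cubeMeasure ι]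
      fun k => (if x = y then chi p y (k j) else 0) * u k := by
    filter_upwards [A_apply_ae_eq_of_ae_eq hA (hA y j u) x j] with k hk
    rw [mul_apply_eq_comp, hk, ← mul_assoc, chi_mul_chi]
  refine ContinuousLinearMap.ext fun u => Lp.ext ((key u).trans ?_)
  split_ifs with hxy
  · subst hxy
    exact (hA x j u).symm
  · filter_upwards [Lp.coeFn_zero ℂ 2 (cubeMeasure ι)] with k hk
    rw [zero_apply, hk, zero_mul, Pi.zero_apply]

include hA in
theorem commute_A_A {j j' : ι} (x y : Fin p) : Commute (A x j) (A y j') := by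
  refine ContinuousLinearMap.ext fun u => Lp.ext ?_
  filter_upwards [A_apply_ae_eq_of_ae_eq hA (hA y j' u) x j,
    A_apply_ae_eq_of_ae_eq hA (hA x j u) y j'] with k hk hk'
  rw [mul_apply_eq_comp, mul_apply_eq_comp, hk, hk', mul_left_comm]

variable [DecidableEq ι]
  (hB : ∀ (x : Fin p) (j : ι) (u : Lp ℂ 2 (cubeMeasure ι)),
    ⇑(B x j u) =ᵐ[cubeMeasure ι] fun k =>
      (p : ℂ) * ∫ t in Set.Ico (0 : ℝ) 1, chi p x t * u (update k j t))

include hB in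
theorem B_apply_ae_eq_of_ae_eq {u : Lp ℂ 2 (cubeMeasure ι)} {f : (ι → ℝ) → ℂ}
    (hu : ⇑u =ᵐ[cubeMeasure ι] f) (x : Fin p) (j : ι) :
    ⇑(B x j u) =ᵐ[cubeMeasure ι] fun k =>
      (p : ℂ) * ∫ t in Set.Ico (0 : ℝ) 1, chi p x t * f (update k j t) := by
  filter_upwards [hB x j u, ae_ae_update_of_ae_eq hu j] with k hk hk'
  rw [hk]
  congr 1
  exact integral_congr_ae (hk'.mono fun t ht => congrArg (chi p x t * ·) ht)

include hA hB in
theorem B_mul_A (j : ι) (x y : Fin p) : B x j * A y j = if x = y then B y j else 0 := by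
  have key (u : Lp ℂ 2 (cubeMeasure ι)) : ⇑((B x j * A y j) u) =ᵐ[cubeMeasure ι]
      fun k => (p : ℂ) * ∫ t in Set.Ico (0 : ℝ) 1,
        (if x = y then chi p y t else 0) * u (update k j t) := by
    filter_upwards [B_apply_ae_eq_of_ae_eq hB (hA y j u) x j] with k hk
    simp only [mul_apply_eq_comp, hk, update_self, ← mul_assoc, chi_mul_chi]
  refine ContinuousLinearMap.ext fun u => Lp.ext ((key u).trans ?_)
  split_ifs with hxy
  · subst hxy
    exact (hB x j u).symm
  · filter_upwards [Lp.coeFn_zero ℂ 2 (cubeMeasure ι)] with k hk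
    rw [zero_apply, hk, Pi.zero_apply]
    simp

include hB in
theorem B_mul_B (j : ι) (x y : Fin p) : B x j * B y j = B y j := by
  have hp : (p : ℂ) ≠ 0 := Nat.cast_ne_zero.mpr x.pos.ne'
  refine ContinuousLinearMap.ext fun u => Lp.ext ?_
  filter_upwards [B_apply_ae_eq_of_ae_eq hB (hB y j u) x j, hB y j u] with k hk hk'
  simp only [mul_apply_eq_comp, hk, hk', update_idem, integral_mul_const,
    integral_chi]
  field_simp

include hA hB in
theorem commute_A_B {j j' : ι} (hjj' : j ≠ j') (x y : Fin p) : Commute (A x j) (B y j') := by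
  refine ContinuousLinearMap.ext fun u => Lp.ext ?_
  filter_upwards [A_apply_ae_eq_of_ae_eq hA (hB y j' u) x j,
    B_apply_ae_eq_of_ae_eq hB (hA x j u) y j'] with k hk hk'
  simp only [mul_apply_eq_comp, hk, hk', update_of_ne hjj', mul_left_comm _ (chi p x (k j)),
    integral_const_mul]

include hB in
theorem commute_B_B {j j' : ι} (hjj' : j ≠ j') (x y : Fin p) : Commute (B x j) (B y j') := by
  refine ContinuousLinearMap.ext fun u => Lp.ext ?_
  have hu : Integrable u (cubeMeasure ι) := (Lp.memLp u).integrable (by norm_num)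
  filter_upwards [B_apply_ae_eq_of_ae_eq hB (hB y j' u) x j,
    B_apply_ae_eq_of_ae_eq hB (hB x j u) y j', integrable_update_update_ae hu j j']
    with k hk hk' hint
  set F : ℝ → ℝ → ℂ := fun t s => chi p x t * (chi p y s * u (update (update k j t) j' s))
  have hF : Integrable (uncurry F)
      ((volume.restrict (Set.Ico (0 : ℝ) 1)).prod (volume.restrict (Set.Ico (0 : ℝ) 1))) := by
    have hchi : Measurable fun z : ℝ × ℝ => chi p x z.1 * chi p y z.2 :=
      ((measurable_chi x).comp measurable_fst).mul ((measurable_chi y).comp measurable_snd)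
    refine (hint.bdd_mul hchi.aestronglyMeasurable (c := 1) (ae_of_all _ fun z => ?_)).congr
      (ae_of_all _ fun z => ?_)
    · rw [norm_mul]
      exact mul_le_one₀ (norm_chi_le x z.1) (norm_nonneg _) (norm_chi_le y z.2)
    · simp only [F, uncurry, mul_assoc]
  calc ((B x j * B y j') u) k
      = (p : ℂ) * ∫ t in Set.Ico (0 : ℝ) 1, (p : ℂ) * ∫ s in Set.Ico (0 : ℝ) 1, F t s := by
        simp only [mul_apply_eq_comp, hk, F, integral_const_mul, mul_left_comm (chi p x _) (p : ℂ)]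
    _ = (p : ℂ) * ∫ s in Set.Ico (0 : ℝ) 1, (p : ℂ) * ∫ t in Set.Ico (0 : ℝ) 1, F t s := by
        simp only [integral_const_mul, integral_integral_swap hF]
    _ = ((B y j' * B x j) u) k := by
        simp only [mul_apply_eq_comp, hk', F, update_comm hjj',
          mul_left_comm (chi p x _) (chi p y _), integral_const_mul, mul_left_comm (chi p y _) (p : ℂ)]

include hA hB in
theorem abRelations : ABRelations A B where
  a_mul_a := A_mul_A hA
  b_mul_a := B_mul_A hA hB
  b_mul_b := B_mul_B hB
  commute_a_a _ _ _ := commute_A_A hA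
  commute_a_b _ _ := commute_A_B hA hB
  commute_b_b _ _ := commute_B_B hB

end Operators

theorem Dop_eq_noncommProd_localFactor {p N : ℕ}
    {A B : Fin p → Fin N → (Lp ℂ 2 (cubeMeasure (Fin N)) →L[ℂ] Lp ℂ 2 (cubeMeasure (Fin N)))}
    (h : ABRelations A B) (α : Finset (Fin N)) (i m : Fin N → Fin p) :
    Dop A B α i m = Finset.univ.noncommProd (localFactor A B α i m)
      (h.pairwise_commute_localFactor _ _ _ _ _ _ _) := by
  rw [Dop, Cop, ← Fin.sort_univ, mul_assoc]
  exact h.prod_sort_eq_noncommProd_localFactor α i m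

theorem stmt_9_general (p N : ℕ)
    (A B : Fin p → Fin N →
      (Lp ℂ 2 (cubeMeasure (Fin N)) →L[ℂ] Lp ℂ 2 (cubeMeasure (Fin N))))
    (hA : ∀ (i : Fin p) (j : Fin N) (u : Lp ℂ 2 (cubeMeasure (Fin N))),
      ⇑(A i j u) =ᵐ[cubeMeasure (Fin N)] fun k => chi p i (k j) * u k)
    (hB : ∀ (i : Fin p) (j : Fin N) (u : Lp ℂ 2 (cubeMeasure (Fin N))),
      ⇑(B i j u) =ᵐ[cubeMeasure (Fin N)] fun k =>
        (p : ℂ) * ∫ x in Set.Ico (0 : ℝ) 1, chi p i x * u (Function.update k j x)) :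
    ∀ (α : Finset (Fin N)) (i q : Fin N → Fin p),
      (∀ j ∉ α, i j = q j) →
      ∀ (m r : Fin N → Fin p),
        Dop A B α i m * Dop A B α q r =
          (if ∀ j ∈ α, m j = q j then (1 : ℂ) else 0) • Dop A B α i r := by
  intro α i q hiq m r
  have h : ABRelations A B := abRelations hA hB
  rw [Dop_eq_noncommProd_localFactor h, Dop_eq_noncommProd_localFactor h,
    Dop_eq_noncommProd_localFactor h, ite_smul, one_smul, zero_smul]
  -- the two sides differ only in the `Decidable` instance of the condition
  convert h.noncommProd_localFactor_mul hiq m r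

/-- if the restrictions of `i` and `q` to `η ∖ α` coincide, then
`𝒟_α(i,m) · 𝒟_α(q,r) = δ(m, q_α) · 𝒟_α(i,r)`, where `δ(m, q_α) = 1` iff `m` and
`q` agree on `α`. -/
theorem stmt_9 (p N : ℕ) (hp : 0 < p) (hN : 0 < N)
    (A B : Fin p → Fin N →
      (Lp ℂ 2 (cubeMeasure (Fin N)) →L[ℂ] Lp ℂ 2 (cubeMeasure (Fin N))))
    (hA : ∀ (i : Fin p) (j : Fin N) (u : Lp ℂ 2 (cubeMeasure (Fin N))),
      ⇑(A i j u) =ᵐ[cubeMeasure (Fin N)] fun k => chi p i (k j) * u k)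
    (hB : ∀ (i : Fin p) (j : Fin N) (u : Lp ℂ 2 (cubeMeasure (Fin N))),
      ⇑(B i j u) =ᵐ[cubeMeasure (Fin N)] fun k =>
        (p : ℂ) * ∫ x in Set.Ico (0 : ℝ) 1, chi p i x * u (Function.update k j x)) :
    ∀ (α : Finset (Fin N)) (i q : Fin N → Fin p),
      (∀ j ∉ α, i j = q j) →
      ∀ (m r : Fin N → Fin p),
        Dop A B α i m * Dop A B α q r =
          (if ∀ j ∈ α, m j = q j then (1 : ℂ) else 0) • Dop A B α i r :=
  stmt_9_general p N A B hA hB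
end

section
/- Let p, N be positive integers, η = {1,...,N}, and let L² be the Hilbert space of square-integrable complex functions on [0,1)^N. The family of bounded operators {𝒞_α(i, m) : α ⊆ η, i ∈ P_η, m ∈ P_α} is linearly independent over ℂ in the space of bounded operators on L²; equivalently, if Σ_{α ⊆ η} Σ_{i ∈ P_η} Σ_{m ∈ P_α} a_α(i, m)·𝒞_α(i, m) = 0 with complex coefficients a_α(i, m), then all a_α(i, m) = 0. -/
open MeasureTheory

/-- The merge of a multi-index `m ∈ P_α` with (the restriction to `η ∖ α` of) a
multi-index `i ∈ P_η`: equal to `m` on `α` and to `i` outside `α`. -/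
def mergeFn {p N : ℕ} (α : Finset (Fin N)) (m : {j // j ∈ α} → Fin p)
    (i : Fin N → Fin p) : Fin N → Fin p :=
  fun j => if h : j ∈ α then m ⟨j, h⟩ else i j

/-!
Test a vanishing combination `∑ a_α(i,m) 𝒞_α(i,m)` on a tensor product `u = ⊗ⱼ gⱼ` and look at
the result on a box. Each `𝒜_{rj}` multiplies the `j`-th factor by `χ_r` and each `ℬ_{rj}`
replaces it by the constant `p ∫ χ_r gⱼ`, so `𝒞_α(i,m) u` is again a tensor product. Given
`γ ⊆ η`, `s ∈ P_η` and `t ∈ P_γ`, let `gⱼ` be the indicator of the lower half of the cell `tⱼ`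
when `j ∈ γ` and the Haar step (lower half minus upper half) of the cell `sⱼ` otherwise, and let
the `j`-th side of the box be the upper half of the cell `sⱼ` when `j ∈ γ` and its lower half
otherwise. The Haar step has mean zero on every cell and the half-cell indicators vanish on upper
halves, so on the box the `j`-th factor of `𝒞_α(i,m) u` vanishes unless `iⱼ = sⱼ`,
`j ∈ α ↔ j ∈ γ` and `mⱼ = tⱼ` on `γ`. The combination vanishes almost everywhere and the box has
positive measure, so evaluating at one of its points leaves `2^{-|γ|} a_γ(s,t) = 0`.
-/

open Filter Set Function
open scoped ENNReal

theorem ae_ae_update_of_ae {ι : Type*} [Fintype ι] [DecidableEq ι] {X : ι → Type*}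
    [∀ i, MeasurableSpace (X i)] {μ : ∀ i, Measure (X i)} [∀ i, IsProbabilityMeasure (μ i)]
    {P : (∀ i, X i) → Prop} (h : ∀ᵐ x ∂Measure.pi μ, P x) (j : ι) :
    ∀ᵐ x ∂Measure.pi μ, ∀ᵐ y ∂μ j, P (update x j y) := by
  set E := toMeasurable (Measure.pi μ) {x | ¬P x}
  have hE : MeasurableSet E := measurableSet_toMeasurable _ _
  set f := E.indicator (1 : (∀ i, X i) → ℝ≥0∞)
  have hf : Measurable f := measurable_one.indicator hE
  have hmarg : ∫⋯∫⁻_{j}, (∫⋯∫⁻_{j}, f ∂μ) ∂μ = ∫⋯∫⁻_{j}, f ∂μ := by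
    ext x
    simp [lmarginal_singleton, update_idem]
  have hzero : ∫⁻ x, (∫⋯∫⁻_{j}, f ∂μ) x ∂Measure.pi μ = 0 := by
    rw [lintegral_eq_of_lmarginal_eq {j} (hf.lmarginal μ) hf hmarg, lintegral_indicator_one hE,
      measure_toMeasurable]
    exact ae_iff.mp h
  filter_upwards [(lintegral_eq_zero_iff (hf.lmarginal μ)).mp hzero] with x hx
  rw [lmarginal_singleton] at hx
  filter_upwards [(lintegral_eq_zero_iff (hf.comp (measurable_update x))).mp hx] with y hy
  by_contra hP
  simp only [f, comp_apply, Pi.zero_apply, indicator_apply_eq_zero] at hy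
  exact one_ne_zero (hy (subset_toMeasurable _ _ hP))

theorem MeasureTheory.Lp.coeFn_finsetSum_of_ae_eq {α E β : Type*} {m : MeasurableSpace α}
    {μ : Measure α} [NormedAddCommGroup E] {q : ℝ≥0∞} (S : Finset β) {v : β → Lp E q μ}
    {f : β → α → E} (h : ∀ b ∈ S, ⇑(v b) =ᵐ[μ] f b) :
    ⇑(∑ b ∈ S, v b) =ᵐ[μ] fun x => ∑ b ∈ S, f b x :=
  (Lp.coeFn_fun_finsetSum S v).trans <|
    ((eventually_all_finset S).mpr h).mono fun _ hx => Finset.sum_congr rfl hx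

section TensorFunctions

variable {ι X : Type*} [Fintype ι]

def tensorFn (g : ι → X → ℂ) : (ι → X) → ℂ := fun k => ∏ j, g j (k j)

section Update

variable [DecidableEq ι]

theorem tensorFn_update_update (g : ι → X → ℂ) (j : ι) (φ : X → ℂ) (k : ι → X) (x : X) :
    tensorFn (update g j φ) (update k j x) = φ x * ∏ j' ∈ Finset.univ.erase j, g j' (k j') := by
  rw [tensorFn, ← Finset.mul_prod_erase Finset.univ _ (Finset.mem_univ j)]
  simp only [update_self]
  congr 1
  refine Finset.prod_congr rfl fun j' hj' => ?_
  rw [update_of_ne (Finset.ne_of_mem_erase hj'), update_of_ne (Finset.ne_of_mem_erase hj')]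

theorem tensorFn_update_apply (g : ι → X → ℂ) (j : ι) (k : ι → X) (x : X) :
    tensorFn g (update k j x) = g j x * ∏ j' ∈ Finset.univ.erase j, g j' (k j') := by
  simpa using tensorFn_update_update g j (g j) k x

theorem tensorFn_update (g : ι → X → ℂ) (j : ι) (φ : X → ℂ) (k : ι → X) :
    tensorFn (update g j φ) k = φ (k j) * ∏ j' ∈ Finset.univ.erase j, g j' (k j') := by
  simpa using tensorFn_update_update g j φ k (k j)

end Update

variable [MeasurableSpace X]

theorem memLp_tensorFn {q : ℝ≥0∞} {ν : Measure (ι → X)} [IsFiniteMeasure ν] {g : ι → X → ℂ}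
    (hg : ∀ j, Measurable (g j)) (hbdd : ∀ j, ∃ C, ∀ y, ‖g j y‖ ≤ C) :
    MemLp (tensorFn g) q ν := by
  choose C hC using hbdd
  refine MemLp.of_bound ?_ (∏ j, C j) (Eventually.of_forall fun k => ?_)
  · exact (Finset.measurable_prod _ fun j _ => (hg j).comp (measurable_pi_apply j))
      |>.aestronglyMeasurable
  · rw [tensorFn, norm_prod]
    exact Finset.prod_le_prod (fun j _ => norm_nonneg _) fun j _ => hC j (k j)

variable [DecidableEq ι] {q : ℝ≥0∞} [Fact (1 ≤ q)] {ν : Measure (ι → X)}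

def ActsOnFactor (T : Lp ℂ q ν →L[ℂ] Lp ℂ q ν) (j : ι) (Φ : (X → ℂ) → X → ℂ) : Prop :=
  ∀ (g : ι → X → ℂ) (u : Lp ℂ q ν),
    ⇑u =ᵐ[ν] tensorFn g → ⇑(T u) =ᵐ[ν] tensorFn (update g j (Φ (g j)))

theorem ActsOnFactor.of_mul {T : Lp ℂ q ν →L[ℂ] Lp ℂ q ν} {j : ι} {f : X → ℂ}
    (hT : ∀ u, ⇑(T u) =ᵐ[ν] fun k => f (k j) * u k) :
    ActsOnFactor T j fun g y => f y * g y := by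
  intro g u hu
  filter_upwards [hT u, hu] with k hTk huk
  rw [hTk, huk, tensorFn_update, tensorFn, ← Finset.mul_prod_erase _ _ (Finset.mem_univ j),
    mul_assoc]

theorem ActsOnFactor.of_integral {μ : Measure X} [IsProbabilityMeasure μ]
    {T : Lp ℂ q (Measure.pi fun _ : ι => μ) →L[ℂ] Lp ℂ q (Measure.pi fun _ : ι => μ)}
    {j : ι} (c : ℂ) (f : X → ℂ)
    (hT : ∀ u, ⇑(T u) =ᵐ[Measure.pi fun _ => μ] fun k => c * ∫ x, f x * u (update k j x) ∂μ) :
    ActsOnFactor T j fun g _ => c * ∫ x, f x * g x ∂μ := by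
  intro g u hu
  filter_upwards [hT u, ae_ae_update_of_ae hu j] with k hTk huk
  rw [hTk, tensorFn_update, integral_congr_ae (huk.mono fun x hx => by rw [hx])]
  simp_rw [tensorFn_update_apply, ← mul_assoc, integral_mul_const, mul_assoc]

theorem ActsOnFactor.list_prod {T : ι → Lp ℂ q ν →L[ℂ] Lp ℂ q ν} {Φ : ι → (X → ℂ) → X → ℂ}
    (hT : ∀ j, ActsOnFactor (T j) j (Φ j)) {l : List ι} (hl : l.Nodup) {g : ι → X → ℂ}
    {u : Lp ℂ q ν} (hu : ⇑u =ᵐ[ν] tensorFn g) :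
    ⇑((l.map T).prod u) =ᵐ[ν] tensorFn fun j => if j ∈ l then Φ j (g j) else g j := by
  induction l with
  | nil => simpa using hu
  | cons j l ih =>
    obtain ⟨hj, hl⟩ := List.nodup_cons.mp hl
    rw [List.map_cons, List.prod_cons, mul_apply_eq_comp]
    refine (hT j _ _ (ih hl)).trans (EventuallyEq.of_eq (congrArg tensorFn ?_))
    funext j'
    rcases eq_or_ne j' j with rfl | hne
    · simp [hj]
    · simp [hne]

end TensorFunctions

noncomputable section StepFunctions

variable {p : ℕ}

def cell (p : ℕ) (r : Fin p) : Set ℝ := Ico (r / p) ((r + 1) / p)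

def halfCell (p : ℕ) (r : Fin p) (c : ℝ) : Set ℝ := Ico ((r + c) / p) ((r + c + 2⁻¹) / p)

theorem measurableSet_halfCell (r : Fin p) (c : ℝ) : MeasurableSet (halfCell p r c) :=
  measurableSet_Ico

theorem chi_eq_indicator (r : Fin p) : chi p r = (cell p r).indicator 1 := by
  funext y
  simp [chi, cell, indicator_apply]

theorem floor_eq_of_mem_cell (hp : 0 < p) {r : Fin p} {y : ℝ} (hy : y ∈ cell p r) :
    ⌊y * p⌋₊ = r := by
  have hp' : (0 : ℝ) < p := Nat.cast_pos.mpr hp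
  obtain ⟨hlo, hhi⟩ := hy
  rw [div_le_iff₀ hp'] at hlo
  rw [lt_div_iff₀ hp'] at hhi
  exact (Nat.floor_eq_iff ((Nat.cast_nonneg _).trans hlo)).mpr ⟨hlo, hhi⟩

theorem eq_of_mem_cell (hp : 0 < p) {t s : Fin p} {y : ℝ} (ht : y ∈ cell p t)
    (hs : y ∈ cell p s) : t = s :=
  Fin.ext (by rw [← floor_eq_of_mem_cell hp ht, floor_eq_of_mem_cell hp hs])

theorem chi_of_mem_cell (hp : 0 < p) {s : Fin p} {y : ℝ} (hy : y ∈ cell p s) (r : Fin p) :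
    chi p r y = if r = s then 1 else 0 := by
  rw [chi_eq_indicator]
  split_ifs with hrs
  · exact indicator_of_mem (hrs ▸ hy) _
  · exact indicator_of_notMem (fun hr => hrs (eq_of_mem_cell hp hr hy)) _

theorem cell_subset_Ico (r : Fin p) : cell p r ⊆ Ico 0 1 := by
  have hr : (r : ℝ) + 1 ≤ p := by exact_mod_cast r.isLt
  exact Ico_subset_Ico (by positivity) (div_le_one_of_le₀ hr (Nat.cast_nonneg p))

theorem halfCell_subset_cell (r : Fin p) {c : ℝ} (hc₀ : 0 ≤ c) (hc₁ : c ≤ 2⁻¹) :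
    halfCell p r c ⊆ cell p r :=
  Ico_subset_Ico (div_le_div_of_nonneg_right (by linarith) (Nat.cast_nonneg p))
    (div_le_div_of_nonneg_right (by linarith) (Nat.cast_nonneg p))

theorem volume_real_halfCell (hp : 0 < p) (r : Fin p) (c : ℝ) :
    volume.real (halfCell p r c) = (2 * (p : ℝ))⁻¹ := by
  have hp' : (0 : ℝ) < p := Nat.cast_pos.mpr hp
  rw [halfCell, Real.volume_real_Ico, max_eq_left (by field_simp; norm_num)]
  field_simp
  ring

theorem disjoint_halfCell (hp : 0 < p) (t s : Fin p) :
    Disjoint (halfCell p t 0) (halfCell p s 2⁻¹) := by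
  refine Set.disjoint_left.mpr fun y hyt hys => ?_
  obtain rfl := eq_of_mem_cell hp (halfCell_subset_cell t le_rfl (by norm_num) hyt)
    (halfCell_subset_cell s (by norm_num) le_rfl hys)
  exact absurd (hyt.2.trans_le (by rw [add_zero])) (not_lt.mpr hys.1)

def cellAverage (p : ℕ) (r : Fin p) (g : ℝ → ℂ) : ℂ := p * ∫ x in Ico 0 1, chi p r x * g x

theorem cellAverage_sub (r : Fin p) {f g : ℝ → ℂ} (hf : IntegrableOn f (Ico 0 1))
    (hg : IntegrableOn g (Ico 0 1)) :
    cellAverage p r (f - g) = cellAverage p r f - cellAverage p r g := by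
  have hchi : Measurable (chi p r) := by
    rw [chi_eq_indicator]; exact measurable_one.indicator measurableSet_Ico
  have hbdd : ∀ y, ‖chi p r y‖ ≤ 1 := fun y => by unfold chi; split_ifs <;> simp
  simp only [cellAverage, Pi.sub_apply, mul_sub]
  rw [integral_sub (hf.bdd_mul hchi.aestronglyMeasurable (ae_of_all _ hbdd))
    (hg.bdd_mul hchi.aestronglyMeasurable (ae_of_all _ hbdd))]
  ring

theorem cellAverage_halfCell (hp : 0 < p) (r' r : Fin p) {c : ℝ} (hc₀ : 0 ≤ c)
    (hc₁ : c ≤ 2⁻¹) :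
    cellAverage p r' ((halfCell p r c).indicator 1) = if r' = r then 2⁻¹ else 0 := by
  have hsub := halfCell_subset_cell r hc₀ hc₁
  have hpt : ∀ x, chi p r' x * (halfCell p r c).indicator 1 x =
      if r' = r then (halfCell p r c).indicator (fun _ => 1) x else 0 := by
    intro x
    by_cases hx : x ∈ halfCell p r c
    · simp [hx, chi_of_mem_cell hp (hsub hx)]
    · simp [hx]
  simp_rw [cellAverage, hpt]
  split_ifs
  · rw [integral_indicator_const _ (measurableSet_halfCell r c),
      measureReal_restrict_apply (measurableSet_halfCell r c),
      inter_eq_left.mpr (hsub.trans (cell_subset_Ico r)), volume_real_halfCell hp]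
    have : (p : ℂ) ≠ 0 := Nat.cast_ne_zero.mpr hp.ne'
    rw [Complex.real_smul, mul_one]
    push_cast
    field_simp
  · simp

end StepFunctions

noncomputable section TestFunctions

variable {p : ℕ} {ι : Type*} [DecidableEq ι]

def testFactor (p : ℕ) (γ : Finset ι) (s t : ι → Fin p) (j : ι) : ℝ → ℂ :=
  if j ∈ γ then (halfCell p (t j) 0).indicator 1
  else (halfCell p (s j) 0).indicator 1 - (halfCell p (s j) 2⁻¹).indicator 1

def testBox (p : ℕ) (γ : Finset ι) (s : ι → Fin p) (j : ι) : Set ℝ :=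
  if j ∈ γ then halfCell p (s j) 2⁻¹ else halfCell p (s j) 0

/-- `boxValue 2⁻¹ α γ (i j) (s j) (m j) (t j) j` is the value of the `j`-th factor of
`𝒞_α(i,m) (tensorFn (testFactor p γ s t))` on `testBox p γ s`. -/
def boxValue {κ R : Type*} [DecidableEq κ] [MulZeroOneClass R] (c : R)
    (α γ : Finset ι) (r s m t : κ) (j : ι) : R :=
  (if r = s then 1 else 0) *
    if j ∈ γ then (if j ∈ α ∧ m = t then c else 0) else if j ∈ α then 0 else 1

theorem prod_boxValue {κ R : Type*} [Fintype ι] [DecidableEq κ]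
    [CommMonoidWithZero R] (c : R) (α γ : Finset ι) (i s m t : ι → κ) :
    ∏ j, boxValue c α γ (i j) (s j) (m j) (t j) j =
      if i = s ∧ α = γ ∧ ∀ j ∈ γ, m j = t j then c ^ γ.card else 0 := by
  unfold boxValue
  split_ifs with h
  · obtain ⟨rfl, rfl, hmt⟩ := h
    have hfactor : ∀ j, ((if i j = i j then 1 else 0) *
        if j ∈ α then (if j ∈ α ∧ m j = t j then c else 0) else if j ∈ α then 0 else 1) =
        if j ∈ α then c else 1 := fun j => by
      by_cases hj : j ∈ α
      · simp [hj, hmt j hj]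
      · simp [hj]
    rw [Finset.prod_congr rfl fun j _ => hfactor j, Finset.prod_ite_mem, Finset.univ_inter,
      Finset.prod_const]
  · obtain ⟨j, hj⟩ : ∃ j, ¬(i j = s j ∧ (j ∈ α ↔ j ∈ γ) ∧ (j ∈ γ → m j = t j)) := by
      by_contra! hall
      exact h ⟨funext fun j => (hall j).1, Finset.ext fun j => (hall j).2.1,
        fun j hj => (hall j).2.2 hj⟩
    refine Finset.prod_eq_zero (Finset.mem_univ j) ?_
    clear h
    split_ifs <;> simp_all

variable {γ : Finset ι} {s t : ι → Fin p}

theorem testBox_subset_cell (j : ι) : testBox p γ s j ⊆ cell p (s j) := by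
  unfold testBox
  split_ifs
  exacts [halfCell_subset_cell _ (by norm_num) le_rfl, halfCell_subset_cell _ le_rfl (by norm_num)]

theorem measurable_testFactor (j : ι) : Measurable (testFactor p γ s t j) := by
  unfold testFactor
  split_ifs
  · exact measurable_one.indicator (measurableSet_halfCell _ _)
  · exact (measurable_one.indicator (measurableSet_halfCell _ _)).sub
      (measurable_one.indicator (measurableSet_halfCell _ _))

theorem norm_testFactor_le (j : ι) (y : ℝ) : ‖testFactor p γ s t j y‖ ≤ 1 := by
  unfold testFactor
  split_ifs
  · by_cases hy : y ∈ halfCell p (t j) 0 <;> simp [hy]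
  · by_cases hy₀ : y ∈ halfCell p (s j) 0 <;> by_cases hy₁ : y ∈ halfCell p (s j) 2⁻¹ <;>
      simp [hy₀, hy₁]

theorem testFactor_of_mem_testBox (hp : 0 < p) {j : ι} {y : ℝ} (hy : y ∈ testBox p γ s j) :
    testFactor p γ s t j y = if j ∈ γ then 0 else 1 := by
  unfold testFactor
  unfold testBox at hy
  split_ifs at hy ⊢
  · exact indicator_of_notMem (disjoint_halfCell hp _ _ |>.notMem_of_mem_right hy) _
  · simp [hy, (disjoint_halfCell hp _ _).notMem_of_mem_left hy]

theorem cellAverage_testFactor (hp : 0 < p) (r : Fin p) (j : ι) :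
    cellAverage p r (testFactor p γ s t j) = if j ∈ γ ∧ r = t j then 2⁻¹ else 0 := by
  unfold testFactor
  split_ifs with hj hrt hrt
  · exact (cellAverage_halfCell hp r _ le_rfl (by norm_num)).trans (if_pos hrt.2)
  · exact (cellAverage_halfCell hp r _ le_rfl (by norm_num)).trans (if_neg fun h => hrt ⟨hj, h⟩)
  · exact absurd hrt.1 hj
  · have hint : ∀ c, IntegrableOn ((halfCell p (s j) c).indicator (1 : ℝ → ℂ)) (Ico 0 1) :=
      fun c => (integrableOn_const (by simp)).indicator (measurableSet_halfCell _ _)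
    rw [cellAverage_sub r (hint _) (hint _), cellAverage_halfCell hp r _ le_rfl (by norm_num),
      cellAverage_halfCell hp r _ (by norm_num) le_rfl, sub_self]

theorem chi_mul_testFactor_of_mem_testBox (hp : 0 < p) (α : Finset ι) {j : ι} (r m : Fin p)
    {y : ℝ} (hy : y ∈ testBox p γ s j) :
    chi p r y * (if j ∈ α then cellAverage p m (testFactor p γ s t j)
      else testFactor p γ s t j y) =
    boxValue 2⁻¹ α γ r (s j) m (t j) j := by
  rw [chi_of_mem_cell hp (testBox_subset_cell j hy), cellAverage_testFactor hp,
    testFactor_of_mem_testBox hp hy, boxValue]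
  by_cases hγ : j ∈ γ <;> by_cases hα : j ∈ α <;> simp [hγ, hα]

theorem measure_pi_testBox_ne_zero [Fintype ι] (hp : 0 < p) :
    Measure.pi (fun _ : ι => volume.restrict (Ico (0 : ℝ) 1)) (univ.pi (testBox p γ s)) ≠ 0 := by
  rw [Measure.pi_pi, Finset.prod_ne_zero_iff]
  intro j _
  rw [Measure.restrict_apply' measurableSet_Ico,
    inter_eq_left.mpr ((testBox_subset_cell j).trans (cell_subset_Ico _))]
  intro h0
  have hreal : volume.real (testBox p γ s j) = (2 * (p : ℝ))⁻¹ := by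
    unfold testBox; split_ifs <;> exact volume_real_halfCell hp _ _
  rw [measureReal_def, h0, ENNReal.toReal_zero] at hreal
  have : (0 : ℝ) < p := Nat.cast_pos.mpr hp
  exact absurd hreal (by positivity)

end TestFunctions

instance : IsProbabilityMeasure (volume.restrict (Ico (0 : ℝ) 1)) :=
  ⟨by simp⟩

instance inst_s11 (ι : Type*) [Fintype ι] : IsProbabilityMeasure (cubeMeasure ι) := by
  unfold cubeMeasure
  infer_instance

theorem mergeFn_of_mem {p N : ℕ} {α : Finset (Fin N)} (m : {j // j ∈ α} → Fin p)
    (i : Fin N → Fin p) {j : Fin N} (hj : j ∈ α) : mergeFn α m i j = m ⟨j, hj⟩ :=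
  dif_pos hj

theorem Cop_apply_ae {p N : ℕ}
    {A B : Fin p → Fin N → Lp ℂ 2 (cubeMeasure (Fin N)) →L[ℂ] Lp ℂ 2 (cubeMeasure (Fin N))}
    (hA : ∀ r j, ActsOnFactor (A r j) j fun g y => chi p r y * g y)
    (hB : ∀ r j, ActsOnFactor (B r j) j fun g _ => cellAverage p r g)
    (α : Finset (Fin N)) (i m : Fin N → Fin p) {g : Fin N → ℝ → ℂ}
    {u : Lp ℂ 2 (cubeMeasure (Fin N))} (hu : ⇑u =ᵐ[cubeMeasure (Fin N)] tensorFn g) :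
    ⇑(Cop A B α i m u) =ᵐ[cubeMeasure (Fin N)]
      tensorFn fun j y => chi p (i j) y * if j ∈ α then cellAverage p (m j) (g j) else g j y := by
  have hBu := ActsOnFactor.list_prod (fun j => hB (m j) j) (Finset.sort_nodup α (· ≤ ·)) hu
  refine (ActsOnFactor.list_prod (fun j => hA (i j) j) (List.nodup_finRange N) hBu).trans
    (EventuallyEq.of_eq (congrArg tensorFn ?_))
  funext j y
  simp only [List.mem_finRange, if_true, Finset.mem_sort]
  split_ifs <;> rfl

theorem sum_coeff_mul_ite_eq_zero {p N : ℕ} (hp : 0 < p)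
    {A B : Fin p → Fin N → Lp ℂ 2 (cubeMeasure (Fin N)) →L[ℂ] Lp ℂ 2 (cubeMeasure (Fin N))}
    (hA : ∀ r j, ActsOnFactor (A r j) j fun g y => chi p r y * g y)
    (hB : ∀ r j, ActsOnFactor (B r j) j fun g _ => cellAverage p r g)
    {a : ∀ α : Finset (Fin N), (Fin N → Fin p) → ({j // j ∈ α} → Fin p) → ℂ}
    (h : ∑ α ∈ (Finset.univ : Finset (Fin N)).powerset, ∑ i : Fin N → Fin p,
      ∑ m : {j // j ∈ α} → Fin p, a α i m • Cop A B α i (mergeFn α m i) = 0)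
    (γ : Finset (Fin N)) (s t : Fin N → Fin p) :
    ∑ α ∈ (Finset.univ : Finset (Fin N)).powerset, ∑ i : Fin N → Fin p,
      ∑ m : {j // j ∈ α} → Fin p, a α i m *
        (if i = s ∧ α = γ ∧ ∀ j ∈ γ, mergeFn α m i j = t j then (2⁻¹ : ℂ) ^ γ.card else 0) =
      0 := by
  have hmem : MemLp (tensorFn (testFactor p γ s t)) 2 (cubeMeasure (Fin N)) :=
    memLp_tensorFn measurable_testFactor fun j => ⟨1, norm_testFactor_le j⟩
  have hu := hmem.coeFn_toLp
  have hsum : ∑ α ∈ (Finset.univ : Finset (Fin N)).powerset, ∑ i : Fin N → Fin p,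
      ∑ m : {j // j ∈ α} → Fin p, a α i m • Cop A B α i (mergeFn α m i) hmem.toLp = 0 := by
    simpa using congrArg (fun T => T hmem.toLp) h
  have hae := Lp.coeFn_finsetSum_of_ae_eq (Finset.univ : Finset (Fin N)).powerset fun α _ =>
    Lp.coeFn_finsetSum_of_ae_eq Finset.univ fun i _ =>
      Lp.coeFn_finsetSum_of_ae_eq Finset.univ fun m _ =>
        (Lp.coeFn_smul (a α i m) (Cop A B α i (mergeFn α m i) hmem.toLp)).trans
          ((Cop_apply_ae hA hB α i (mergeFn α m i) hu).fun_comp (a α i m * ·))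
  rw [hsum] at hae
  obtain ⟨k, hk, hk0⟩ := Measure.exists_mem_of_measure_ne_zero_of_ae
    (measure_pi_testBox_ne_zero hp) (ae_restrict_of_ae (hae.symm.trans (Lp.coeFn_zero _ _ _)))
  refine Eq.trans ?_ hk0
  refine Finset.sum_congr rfl fun α _ => Finset.sum_congr rfl fun i _ =>
    Finset.sum_congr rfl fun m _ => ?_
  rw [comp_apply, tensorFn, Finset.prod_congr rfl fun j _ =>
    chi_mul_testFactor_of_mem_testBox hp α _ _ (hk j (mem_univ j)), prod_boxValue]
  congr

theorem sum_coeff_mul_ite_eq {p N : ℕ}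
    (a : ∀ α : Finset (Fin N), (Fin N → Fin p) → ({j // j ∈ α} → Fin p) → ℂ) (c : ℂ)
    (γ : Finset (Fin N)) (s t : Fin N → Fin p) :
    ∑ α ∈ (Finset.univ : Finset (Fin N)).powerset, ∑ i : Fin N → Fin p,
      ∑ m : {j // j ∈ α} → Fin p, a α i m *
        (if i = s ∧ α = γ ∧ ∀ j ∈ γ, mergeFn α m i j = t j then c else 0) =
      a γ s (fun j => t j) * c := by
  rw [Finset.sum_eq_single_of_mem γ (Finset.mem_powerset.mpr (Finset.subset_univ γ)),
    Finset.sum_eq_single_of_mem s (Finset.mem_univ s),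
    Finset.sum_eq_single_of_mem (fun j : {j // j ∈ γ} => t j) (Finset.mem_univ _)]
  · exact congrArg _ (if_pos ⟨rfl, rfl, fun j hj => mergeFn_of_mem _ s hj⟩)
  · intro m _ hm
    obtain ⟨j, hj⟩ := Function.ne_iff.mp hm
    simp only [true_and, mul_ite, mul_zero]
    exact if_neg fun hall => hj (by rw [← mergeFn_of_mem m s j.2, hall j j.2])
  · intro i _ hi
    simp [hi]
  · intro α _ hα
    simp [hα]

theorem stmt_11_general (p N : ℕ) (hp : 0 < p)
    (A B : Fin p → Fin N →
      (Lp ℂ 2 (cubeMeasure (Fin N)) →L[ℂ] Lp ℂ 2 (cubeMeasure (Fin N))))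
    (hA : ∀ (i : Fin p) (j : Fin N) (u : Lp ℂ 2 (cubeMeasure (Fin N))),
      ⇑(A i j u) =ᵐ[cubeMeasure (Fin N)] fun k => chi p i (k j) * u k)
    (hB : ∀ (i : Fin p) (j : Fin N) (u : Lp ℂ 2 (cubeMeasure (Fin N))),
      ⇑(B i j u) =ᵐ[cubeMeasure (Fin N)] fun k =>
        (p : ℂ) * ∫ x in Set.Ico (0 : ℝ) 1, chi p i x * u (Function.update k j x))
    (a : ∀ α : Finset (Fin N), (Fin N → Fin p) → ({j // j ∈ α} → Fin p) → ℂ)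
    (h : ∑ α ∈ (Finset.univ : Finset (Fin N)).powerset,
      ∑ i : Fin N → Fin p, ∑ m : {j // j ∈ α} → Fin p,
        a α i m • Cop A B α i (mergeFn α m i) = 0) :
    ∀ (α : Finset (Fin N)) (i : Fin N → Fin p) (m : {j // j ∈ α} → Fin p),
      a α i m = 0 := by
  intro α i m
  have hzero := sum_coeff_mul_ite_eq_zero hp (fun r j => ActsOnFactor.of_mul (hA r j))
    (fun r j => ActsOnFactor.of_integral _ _ (hB r j)) h α i (mergeFn α m i)
  rw [sum_coeff_mul_ite_eq] at hzero
  simpa [mergeFn_of_mem] using hzero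

/-- the family `{𝒞_α(i,m) : α ⊆ η, i ∈ P_η, m ∈ P_α}` is linearly
independent: if `Σ_{α,i,m} a_α(i,m) 𝒞_α(i,m) = 0` then all `a_α(i,m) = 0`.
(Since `𝒞_α(i,m)` only uses the values of its third argument on `α`, the
multi-index `m ∈ P_α` is encoded as a function on `α`, merged with `i` outside
`α` to form a full function.) -/
theorem stmt_11 (p N : ℕ) (hp : 0 < p) (hN : 0 < N)
    (A B : Fin p → Fin N →
      (Lp ℂ 2 (cubeMeasure (Fin N)) →L[ℂ] Lp ℂ 2 (cubeMeasure (Fin N))))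
    (hA : ∀ (i : Fin p) (j : Fin N) (u : Lp ℂ 2 (cubeMeasure (Fin N))),
      ⇑(A i j u) =ᵐ[cubeMeasure (Fin N)] fun k => chi p i (k j) * u k)
    (hB : ∀ (i : Fin p) (j : Fin N) (u : Lp ℂ 2 (cubeMeasure (Fin N))),
      ⇑(B i j u) =ᵐ[cubeMeasure (Fin N)] fun k =>
        (p : ℂ) * ∫ x in Set.Ico (0 : ℝ) 1, chi p i x * u (Function.update k j x))
    (a : ∀ α : Finset (Fin N), (Fin N → Fin p) → ({j // j ∈ α} → Fin p) → ℂ)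
    (h : ∑ α ∈ (Finset.univ : Finset (Fin N)).powerset,
      ∑ i : Fin N → Fin p, ∑ m : {j // j ∈ α} → Fin p,
        a α i m • Cop A B α i (mergeFn α m i) = 0) :
    ∀ (α : Finset (Fin N)) (i : Fin N → Fin p) (m : {j // j ∈ α} → Fin p),
      a α i m = 0 :=
  stmt_11_general p N hp A B hA hB a h
end
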